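/- arXiv:1103.4565 — 7 statements merged into one kernel-verified Lean document; each statement's English description precedes it below -/
import Mathlib

section
/- An abelian group G is residually finite (i.e., embeds into a product of finite abelian groups) if and only if its first Ulm subgroup G¹ = ⋂_{m ≥ 1} mG is trivial. -/
/-!
If `f : G →+ F` with `F` finite, then `f` kills `|F| G`, hence kills `G¹`; so an embedding into a
product of finite groups forces `G¹ = 0`. Conversely, if `x ∉ mG` for some `m > 0`, a character
`G / mG → ℚ/ℤ` not vanishing at `x` takes values in the `m`-torsion of `ℚ/ℤ`, which is finite;
these characters, one for each `x ≠ 0`, embed `G` into a product of finite groups.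
-/

/-- The subgroup mG = {m•x : x ∈ G} of an abelian group G. -/
def nsmulRange (G : Type*) [AddCommGroup G] (m : ℕ) : AddSubgroup G :=
  (m • AddMonoidHom.id G).range

/-- The first Ulm subgroup G¹ = ⋂_{m ≥ 1} mG. -/
def ulm (G : Type*) [AddCommGroup G] : AddSubgroup G :=
  ⨅ m ∈ Set.Ioi (0 : ℕ), nsmulRange G m

universe u

section

variable {G : Type*} [AddCommGroup G]

theorem nsmul_mem_nsmulRange (m : ℕ) (y : G) : m • y ∈ nsmulRange G m :=
  ⟨y, rfl⟩

theorem mem_ulm {x : G} : x ∈ ulm G ↔ ∀ m, 0 < m → x ∈ nsmulRange G m := by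
  simp only [ulm, AddSubgroup.mem_iInf, Set.mem_Ioi]

theorem map_eq_zero_of_mem_ulm {F : Type*} [AddCommGroup F] [Finite F] (f : G →+ F) {x : G}
    (hx : x ∈ ulm G) : f x = 0 := by
  obtain ⟨y, rfl⟩ := mem_ulm.1 hx (Nat.card F) Nat.card_pos
  rw [AddMonoidHom.smul_apply, AddMonoidHom.id_apply, map_nsmul, card_nsmul_eq_zero']

theorem exists_notMem_nsmulRange_of_ulm_eq_bot (h : ulm G = ⊥) {x : G} (hx : x ≠ 0) :
    ∃ m, 0 < m ∧ x ∉ nsmulRange G m := by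
  by_contra! hall
  exact hx ((AddSubgroup.eq_bot_iff_forall _).1 h x (mem_ulm.2 hall))

theorem AddCircle.finite_range_of_nsmul_eq_zero {𝕜 : Type*} [AddCommGroup 𝕜] [LinearOrder 𝕜]
    [IsOrderedAddMonoid 𝕜] {p : 𝕜} (φ : G →+ AddCircle p) {m : ℕ} (hm : 0 < m)
    (h : ∀ g, m • φ g = 0) : Finite φ.range :=
  ((AddCircle.finite_torsion p hm).subset <| by rintro _ ⟨g, rfl⟩; exact h g).to_subtype

theorem exists_finite_apply_ne_zero_of_notMem_nsmulRange {m : ℕ} (hm : 0 < m) {x : G}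
    (hx : x ∉ nsmulRange G m) :
    ∃ (F : Type) (_ : AddCommGroup F) (_ : Finite F) (φ : G →+ F), φ x ≠ 0 := by
  have hx' : (x : G ⧸ nsmulRange G m) ≠ 0 := by rwa [Ne, QuotientAddGroup.eq_zero_iff]
  obtain ⟨c, hc⟩ := CharacterModule.exists_character_apply_ne_zero_of_ne_zero hx'
  let φ : G →+ AddCircle (1 : ℚ) := (c : G ⧸ nsmulRange G m →+ _).comp (QuotientAddGroup.mk' _)
  have hφ : ∀ g, m • φ g = 0 := fun g => by
    rw [← map_nsmul]
    change c ((m • g : G) : G ⧸ nsmulRange G m) = 0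
    rw [(QuotientAddGroup.eq_zero_iff _).2 (nsmul_mem_nsmulRange m g), map_zero]
  exact ⟨φ.range, _, AddCircle.finite_range_of_nsmul_eq_zero φ hm hφ, φ.rangeRestrict,
    fun h => hc (congrArg Subtype.val h)⟩

end

theorem exists_injective_pi_finite_of_forall_ne_zero {G : Type} [AddCommGroup G]
    (h : ∀ x : G, x ≠ 0 → ∃ (F : Type) (_ : AddCommGroup F) (_ : Finite F) (φ : G →+ F), φ x ≠ 0) :
    ∃ (ι : Type) (F : ι → AddCommGrpCat.{u}), (∀ i, Finite (F i)) ∧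
      ∃ f : G →+ (∀ i, F i), Function.Injective f := by
  choose F _ hF φ hφ using h
  refine ⟨{x : G // x ≠ 0}, fun x => AddCommGrpCat.of (ULift (F x.1 x.2)),
    fun x => inferInstanceAs (Finite (ULift _)),
    AddMonoidHom.pi fun x => AddEquiv.ulift.symm.toAddMonoidHom.comp (φ x.1 x.2), ?_⟩
  refine (injective_iff_map_eq_zero _).2 fun x hx => by_contra fun hx0 => hφ x hx0 ?_
  exact congrArg ULift.down (congrFun hx ⟨x, hx0⟩)

/-- G is residually finite (embeds into a product of finite abelian groups) iff G¹ = 0. -/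
theorem residuallyFinite_iff_ulm_eq_bot (G : Type) [AddCommGroup G] :
    (∃ (ι : Type) (F : ι → AddCommGrpCat), (∀ i, Finite (F i)) ∧
      ∃ f : G →+ (∀ i, F i), Function.Injective f) ↔ ulm G = ⊥ := by
  constructor
  · rintro ⟨ι, F, hF, f, hf⟩
    refine (AddSubgroup.eq_bot_iff_forall _).2 fun x hx => hf ?_
    funext i
    have := hF i
    rw [map_zero]
    exact map_eq_zero_of_mem_ulm ((Pi.evalAddMonoidHom _ i).comp f) hx
  · intro h
    refine exists_injective_pi_finite_of_forall_ne_zero fun x hx => ?_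
    obtain ⟨m, hm, hxm⟩ := exists_notMem_nsmulRange_of_ulm_eq_bot h hx
    exact exists_finite_apply_ne_zero_of_notMem_nsmulRange hm hxm
end

section
/- If G is an abelian group such that the quotient G/G¹ by the first Ulm subgroup is finite, then G¹ is divisible and hence G¹ equals the maximal divisible subgroup D(G) of G. -/
lemma mem_ulm_iff {G : Type*} [AddCommGroup G] {x : G} :
    x ∈ ulm G ↔ ∀ m : ℕ, 0 < m → ∃ y, m • y = x := by
  simp [ulm, nsmulRange, AddSubgroup.mem_iInf, AddMonoidHom.mem_range, Set.mem_Ioi]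

/-- If G/G¹ is finite then G¹ is divisible, and equals the maximal divisible subgroup D(G). -/
theorem ulm_divisible_of_finiteQuotient (G : Type*) [AddCommGroup G]
    (h : Finite (G ⧸ ulm G)) :
    (∀ m : ℕ, 0 < m → ∀ x ∈ ulm G, ∃ y ∈ ulm G, m • y = x) ∧
    ulm G = ⨆ H ∈ {H : AddSubgroup G | ∀ m : ℕ, 0 < m → ∀ x ∈ H, ∃ y ∈ H, m • y = x}, H := by
  have hdiv : ∀ m : ℕ, 0 < m → ∀ x ∈ ulm G, ∃ y ∈ ulm G, m • y = x := by
    intro m hm x hx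
    set n := Nat.card (G ⧸ ulm G) with hn
    have hnpos : 0 < n := Nat.card_pos
    obtain ⟨y, hy⟩ := mem_ulm_iff.mp hx (m * n) (Nat.mul_pos hm hnpos)
    refine ⟨n • y, ?_, by rw [← mul_smul]; exact hy⟩
    rw [← QuotientAddGroup.eq_zero_iff]
    have : ((n • y : G) : G ⧸ ulm G) = n • (y : G ⧸ ulm G) := by
      simp
    rw [this, hn]
    exact card_nsmul_eq_zero'
  refine ⟨hdiv, le_antisymm ?_ ?_⟩
  · exact le_iSup₂_of_le (ulm G) hdiv le_rfl
  · refine iSup₂_le fun H hH => fun x hx => mem_ulm_iff.mpr fun m hm => ?_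
    obtain ⟨y, _, hy⟩ := hH m hm x hx
    exact ⟨y, hy⟩
end

section
/- Let G be an abelian group such that every character of G (homomorphism G → ℝ/ℤ) is torsion in Hom(G, ℝ/ℤ). Then G is bounded, i.e., there exists n ≥ 1 with nG = 0. -/
/-!
The characters of `G` form a compact group, the union of the closed sets
`{χ | (n + 1) • χ = 0}`. By Baire one of them has an interior point `χ₀`; translating by `χ₀`,
every character vanishing on some finite set `F` is killed by a fixed `n`. As characters separate
the points of `G ⧸ ⟨F⟩`, this gives `n • G ≤ ⟨F⟩`. Finally `G` is torsion (a point of infinite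
order has a character of infinite order, the circle being divisible), so the finitely generated
group `⟨F⟩` is finite, and `G` is killed by `n` times its exponent.
-/

open Filter Topology

noncomputable def ratCircleToRealCircle : AddCircle (1 : ℚ) →+ AddCircle (1 : ℝ) :=
  QuotientAddGroup.map _ _ (Rat.castHom ℝ).toAddMonoidHom <| by
    rw [AddSubgroup.zmultiples_le]
    exact ⟨1, by simp⟩

lemma ratCircleToRealCircle_injective : Function.Injective ratCircleToRealCircle := by
  refine (injective_iff_map_eq_zero _).mpr fun x hx => ?_
  induction x using QuotientAddGroup.induction_on with
  | H q =>
    change ((q : ℝ) : AddCircle (1 : ℝ)) = 0 at hx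
    rw [AddCircle.coe_eq_zero_iff] at hx ⊢
    obtain ⟨n, hn⟩ := hx
    simp only [zsmul_eq_mul, mul_one] at hn ⊢
    exact ⟨n, mod_cast hn⟩

lemma exists_addCircle_char_apply_ne_zero {A : Type*} [AddCommGroup A] {a : A} (ha : a ≠ 0) :
    ∃ χ : A →+ AddCircle (1 : ℝ), χ a ≠ 0 := by
  obtain ⟨c, hc⟩ := CharacterModule.exists_character_apply_ne_zero_of_ne_zero ha
  exact ⟨ratCircleToRealCircle.comp c,
    (map_ne_zero_iff _ ratCircleToRealCircle_injective).mpr hc⟩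

lemma exists_addMonoidHom_apply_eq_of_not_isOfFinAddOrder {G D : Type*} [AddCommGroup G]
    [AddCommGroup D] [DivisibleBy D ℤ] {x : G} (hx : ¬IsOfFinAddOrder x) (d : D) :
    ∃ χ : G →+ D, χ x = d := by
  obtain ⟨χ, hχ⟩ := (Module.Baer.of_divisible D).extension_property_addMonoidHom
    (zmultiplesHom G x) (injective_zsmul_iff_not_isOfFinAddOrder.mpr hx) (zmultiplesHom D d)
  exact ⟨χ, by simpa using DFunLike.congr_fun hχ 1⟩

lemma AddCircle.exists_not_isOfFinAddOrder (p : ℝ) [Fact (0 < p)] :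
    ∃ a : AddCircle p, ¬IsOfFinAddOrder a := by
  refine ⟨((√2 * p : ℝ) : AddCircle p), AddCircle.not_isOfFinAddOrder_iff_forall_rat_ne_div.mpr
    fun q => ?_⟩
  rw [mul_div_cancel_right₀ _ (Fact.out : 0 < p).ne']
  exact (irrational_sqrt_two.ne_rat q).symm

lemma isAddTorsion_of_isAddTorsion_addCircle_char {G : Type*} [AddCommGroup G] {p : ℝ}
    [Fact (0 < p)] (h : IsAddTorsion (G →+ AddCircle p)) : IsAddTorsion G := by
  intro x
  by_contra hx
  obtain ⟨a, ha⟩ := AddCircle.exists_not_isOfFinAddOrder p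
  obtain ⟨χ, rfl⟩ := exists_addMonoidHom_apply_eq_of_not_isOfFinAddOrder hx a
  exact ha ((AddMonoidHom.eval x).isOfFinAddOrder (h χ))

lemma exists_finset_setOf_forall_eq_subset_of_mem_nhds {ι : Type*} {X : ι → Type*}
    [∀ i, TopologicalSpace (X i)] {f : ∀ i, X i} {s : Set (∀ i, X i)} (hs : s ∈ 𝓝 f) :
    ∃ F : Finset ι, {g | ∀ i ∈ F, g i = f i} ⊆ s := by
  rw [nhds_pi, Filter.mem_pi'] at hs
  obtain ⟨F, t, ht, hFt⟩ := hs
  exact ⟨F, fun g hg => hFt fun i hi => hg i hi ▸ mem_of_mem_nhds (ht i)⟩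

section PointwiseTopology

variable {G A : Type*} [AddCommGroup G] [AddCommGroup A] [TopologicalSpace A]

abbrev AddMonoidHom.pointwiseTopology : TopologicalSpace (G →+ A) :=
  .induced DFunLike.coe inferInstance

attribute [local instance] AddMonoidHom.pointwiseTopology

lemma AddMonoidHom.isInducing_coe : IsInducing (DFunLike.coe : (G →+ A) → G → A) := ⟨rfl⟩

variable [T2Space A] [ContinuousAdd A]

lemma AddMonoidHom.isClosedEmbedding_coe : IsClosedEmbedding (DFunLike.coe : (G →+ A) → G → A) :=
  ⟨⟨AddMonoidHom.isInducing_coe, DFunLike.coe_injective⟩, AddMonoidHom.isClosed_range_coe G A⟩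

lemma AddMonoidHom.isClosed_setOf_nsmul_eq_zero (n : ℕ) : IsClosed {χ : G →+ A | n • χ = 0} := by
  simp only [DFunLike.ext_iff, AddMonoidHom.nsmul_apply, AddMonoidHom.zero_apply,
    Set.ofPred_forall]
  exact isClosed_iInter fun x => isClosed_eq
    (((continuous_apply x).comp AddMonoidHom.isInducing_coe.continuous).nsmul n) continuous_const

lemma exists_finset_forall_char_nsmul_eq_zero [CompactSpace A] (h : IsAddTorsion (G →+ A)) :
    ∃ F : Finset G, ∃ n, 0 < n ∧ ∀ χ : G →+ A, (∀ a ∈ F, χ a = 0) → n • χ = 0 := by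
  have : CompactSpace (G →+ A) := AddMonoidHom.isClosedEmbedding_coe.compactSpace
  have : T2Space (G →+ A) := AddMonoidHom.isClosedEmbedding_coe.isEmbedding.t2Space
  have hcover : ⋃ n : ℕ, {χ : G →+ A | (n + 1) • χ = 0} = Set.univ :=
    Set.eq_univ_of_forall fun χ => by
      obtain ⟨m, hm, hmχ⟩ := isOfFinAddOrder_iff_nsmul_eq_zero.mp (h χ)
      exact Set.mem_iUnion.mpr ⟨m - 1, by rwa [Nat.sub_add_cancel hm]⟩
  obtain ⟨n, χ₀, hχ₀⟩ := nonempty_interior_of_iUnion_of_closed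
    (fun n => AddMonoidHom.isClosed_setOf_nsmul_eq_zero (n + 1)) hcover
  have hnhds : {χ : G →+ A | (n + 1) • χ = 0} ∈ 𝓝 χ₀ := mem_interior_iff_mem_nhds.mp hχ₀
  have hnχ₀ : χ₀ ∈ {χ : G →+ A | (n + 1) • χ = 0} := mem_of_mem_nhds hnhds
  rw [AddMonoidHom.isInducing_coe.nhds_eq_comap, mem_comap] at hnhds
  obtain ⟨t, ht, hts⟩ := hnhds
  obtain ⟨F, hF⟩ := exists_finset_setOf_forall_eq_subset_of_mem_nhds ht
  refine ⟨F, n + 1, n.succ_pos, fun χ hχ => ?_⟩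
  have hsum : (n + 1) • (χ + χ₀) = 0 := hts (hF fun a ha => by simp [hχ a ha])
  rwa [smul_add, hnχ₀, add_zero] at hsum

end PointwiseTopology

lemma nsmul_mem_of_forall_addCircle_char {G : Type*} [AddCommGroup G] {H : AddSubgroup G} {n : ℕ}
    (h : ∀ χ : G →+ AddCircle (1 : ℝ), (∀ a ∈ H, χ a = 0) → n • χ = 0) (x : G) : n • x ∈ H := by
  by_contra hx
  obtain ⟨c, hc⟩ := exists_addCircle_char_apply_ne_zero
    (mt (QuotientAddGroup.eq_zero_iff (n • x)).mp hx)
  have hcH : ∀ a ∈ H, (c.comp (QuotientAddGroup.mk' H)) a = 0 := fun a ha => by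
    simp [(QuotientAddGroup.eq_zero_iff a).mpr ha]
  exact hc (by simpa using DFunLike.congr_fun (h _ hcH) x)

/-- If every character G → ℝ/ℤ is torsion, then G is bounded. -/
theorem bounded_of_all_characters_torsion (G : Type*) [AddCommGroup G]
    (h : ∀ χ : G →+ AddCircle (1 : ℝ), ∃ m : ℕ, 0 < m ∧ m • χ = 0) :
    ∃ n : ℕ, 0 < n ∧ ∀ x : G, n • x = 0 := by
  have hdual : IsAddTorsion (G →+ AddCircle (1 : ℝ)) :=
    fun χ => isOfFinAddOrder_iff_nsmul_eq_zero.mpr (h χ)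
  obtain ⟨F, n, hn, hF⟩ := exists_finset_forall_char_nsmul_eq_zero hdual
  set H := AddSubgroup.closure (F : Set G)
  have hnH : ∀ x, n • x ∈ H := nsmul_mem_of_forall_addCircle_char fun χ hχ =>
    hF χ fun a ha => hχ a (AddSubgroup.subset_closure ha)
  have : AddGroup.FG H := (AddGroup.fg_iff_addSubgroup_fg H).mpr ⟨F, rfl⟩
  have : Finite H := AddCommGroup.finite_of_fg_isAddTorsion H
    ((isAddTorsion_of_isAddTorsion_addCircle_char hdual).addSubgroup H)
  refine ⟨n * AddMonoid.exponent H, Nat.mul_pos hn (AddMonoid.exponent_pos.mpr .of_finite),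
    fun x => ?_⟩
  rw [mul_nsmul]
  exact congrArg Subtype.val (AddMonoid.exponent_nsmul_eq_zero (⟨n • x, hnH x⟩ : H))
end

section
/- For an abelian group G, a character χ : G → ℝ/ℤ is continuous with respect to the natural topology (neighborhood base {mG : m ≥ 1} at 0) if and only if χ is a torsion element of Hom(G, ℝ/ℤ). -/
/-- The natural topology: generated by the cosets of the subgroups mG, m ≥ 1. -/
def naturalTopology (G : Type*) [AddCommGroup G] : TopologicalSpace G :=
  TopologicalSpace.generateFrom
    {s | ∃ m : ℕ, 0 < m ∧ ∃ x : G, s = (fun y => x + y) '' (nsmulRange G m : Set G)}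

/-! If `χ` is continuous, the open set `χ⁻¹(ball 0 (1/4))` contains some `mG`; the ball
contains no nontrivial subgroup of `ℝ/ℤ`, so `χ` kills `mG`, i.e. `m • χ = 0`. Conversely,
if `m • χ = 0` then `χ` is constant on the cosets of `mG`, which are open. -/

open Topology

namespace AddCircle

variable {p : ℝ}

theorem exists_coe_eq_abs_eq_norm (z : AddCircle p) :
    ∃ x : ℝ, (x : AddCircle p) = z ∧ |x| = ‖z‖ := by
  obtain ⟨x, rfl⟩ := QuotientAddGroup.mk_surjective z
  refine ⟨x - round (p⁻¹ * x) * p, ?_, (norm_eq p).symm⟩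
  simp [coe_period]

theorem norm_two_nsmul_of_norm_le {z : AddCircle p} (hz : ‖z‖ ≤ |p| / 4) :
    ‖2 • z‖ = 2 * ‖z‖ := by
  rcases eq_or_ne p 0 with rfl | hp
  · simp_all
  obtain ⟨x, rfl, hx⟩ := exists_coe_eq_abs_eq_norm z
  have h2x : |2 * x| = 2 * |x| := by rw [abs_mul, abs_two]
  rw [← coe_nsmul, nsmul_eq_mul, Nat.cast_ofNat, (norm_coe_eq_abs_iff p hp).mpr (by linarith),
    h2x, hx]

theorem eq_bot_of_subset_ball {H : AddSubgroup (AddCircle p)}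
    (hH : (H : Set (AddCircle p)) ⊆ Metric.ball 0 (|p| / 4)) : H = ⊥ := by
  refine (AddSubgroup.eq_bot_iff_forall H).mpr fun y hy => norm_eq_zero.mp ?_
  have hsmall : ∀ z ∈ H, ‖z‖ < |p| / 4 := fun z hz => mem_ball_zero_iff.mp (hH hz)
  -- `H` is closed under doubling, and doubling doubles norms below `|p| / 4`
  have hpow : ∀ k : ℕ, ‖2 ^ k • y‖ = 2 ^ k * ‖y‖ := by
    intro k
    induction k with
    | zero => simp
    | succ k ih =>
      rw [pow_succ, mul_nsmul, norm_two_nsmul_of_norm_le (hsmall _ (H.nsmul_mem hy _)).le, ih]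
      ring
  by_contra hy0
  obtain ⟨k, hk⟩ := pow_unbounded_of_one_lt (|p| / 4 / ‖y‖) one_lt_two
  have hk' := hsmall _ (H.nsmul_mem hy (2 ^ k))
  rw [hpow, ← lt_div_iff₀ ((norm_nonneg y).lt_of_ne' hy0)] at hk'
  exact lt_asymm hk hk'

end AddCircle

section NaturalTopology

variable {G : Type*} [AddCommGroup G]

theorem mem_nsmulRange {m : ℕ} {g : G} : g ∈ nsmulRange G m ↔ ∃ x : G, m • x = g :=
  Iff.rfl

theorem nsmulRange_mul_le_left (m n : ℕ) : nsmulRange G (m * n) ≤ nsmulRange G m := by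
  rintro _ ⟨x, rfl⟩
  exact ⟨n • x, (mul_nsmul' x m n).symm⟩

theorem nsmulRange_le_ker_iff {A : Type*} [AddCommGroup A] {m : ℕ} {χ : G →+ A} :
    nsmulRange G m ≤ χ.ker ↔ m • χ = 0 := by
  simp only [SetLike.le_def, mem_nsmulRange, AddMonoidHom.mem_ker, AddMonoidHom.ext_iff,
    forall_exists_index, forall_apply_eq_imp_iff, map_nsmul, AddMonoidHom.nsmul_apply,
    AddMonoidHom.zero_apply]

theorem isOpen_image_add_left_nsmulRange {m : ℕ} (hm : 0 < m) (x : G) :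
    IsOpen[naturalTopology G] ((fun y => x + y) '' (nsmulRange G m : Set G)) :=
  TopologicalSpace.GenerateOpen.basic _ ⟨m, hm, x, rfl⟩

theorem exists_nsmulRange_subset_of_isOpen {U : Set G} (hU : IsOpen[naturalTopology G] U)
    (h0 : (0 : G) ∈ U) : ∃ m : ℕ, 0 < m ∧ (nsmulRange G m : Set G) ⊆ U := by
  induction hU with
  | basic s hs =>
    obtain ⟨m, hm, x, rfl⟩ := hs
    rw [Set.image_add_left] at h0 ⊢
    have hx : -x ∈ nsmulRange G m := by simpa using h0
    exact ⟨m, hm, fun g hg => add_mem hx hg⟩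
  | univ => exact ⟨1, one_pos, Set.subset_univ _⟩
  | inter s t _ _ ihs iht =>
    obtain ⟨m, hm, hs⟩ := ihs h0.1
    obtain ⟨n, hn, ht⟩ := iht h0.2
    refine ⟨m * n, Nat.mul_pos hm hn, Set.subset_inter ?_ ?_⟩
    · exact fun g hg => hs (nsmulRange_mul_le_left m n hg)
    · exact fun g hg => ht (nsmulRange_mul_le_left n m (mul_comm m n ▸ hg))
  | sUnion S _ ih =>
    obtain ⟨t, htS, h0t⟩ := h0
    obtain ⟨m, hm, hsub⟩ := ih t htS h0t
    exact ⟨m, hm, hsub.trans (Set.subset_sUnion_of_mem htS)⟩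

theorem continuous_naturalTopology_of_nsmulRange_le_ker {A : Type*} [AddCommGroup A]
    [TopologicalSpace A] {m : ℕ} (hm : 0 < m) {χ : G →+ A} (hχ : nsmulRange G m ≤ χ.ker) :
    Continuous[naturalTopology G, _] χ := by
  let _ := naturalTopology G
  refine continuous_def.mpr fun V _ => isOpen_iff_forall_mem_open.mpr fun g hg => ?_
  refine ⟨_, ?_, isOpen_image_add_left_nsmulRange hm g, ⟨0, zero_mem _, add_zero g⟩⟩
  rintro _ ⟨y, hy, rfl⟩
  simpa [Set.mem_preimage, map_add, χ.mem_ker.mp (hχ hy)] using hg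

end NaturalTopology

/-- A character is continuous for the natural topology iff it is torsion. -/
theorem continuous_naturalTopology_iff_torsion (G : Type*) [AddCommGroup G]
    (χ : G →+ AddCircle (1 : ℝ)) :
    @Continuous G (AddCircle (1 : ℝ)) (naturalTopology G) inferInstance χ ↔
      ∃ m : ℕ, 0 < m ∧ m • χ = 0 := by
  let _ := naturalTopology G
  refine ⟨fun hχ => ?_, fun ⟨m, hm, hmχ⟩ =>
    continuous_naturalTopology_of_nsmulRange_le_ker hm (nsmulRange_le_ker_iff.mpr hmχ)⟩
  obtain ⟨m, hm, hsub⟩ := exists_nsmulRange_subset_of_isOpen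
    (Metric.isOpen_ball.preimage hχ) (show (0 : G) ∈ χ ⁻¹' Metric.ball 0 (|1| / 4) by simp)
  have hmap : (nsmulRange G m).map χ = ⊥ :=
    AddCircle.eq_bot_of_subset_ball (by rintro _ ⟨g, hg, rfl⟩; exact hsub hg)
  exact ⟨m, hm, nsmulRange_le_ker_iff.mp ((nsmulRange G m).map_eq_bot_iff.mp hmap)⟩
end

section
/- For an abelian group G, a character χ : G → ℝ/ℤ is continuous with respect to the profinite topology (finite-index subgroups as neighborhood base at 0) if and only if χ is torsion in Hom(G, ℝ/ℤ). -/
/-- The profinite topology: generated by the cosets of finite-index subgroups. -/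
def profiniteTopology (G : Type*) [AddCommGroup G] : TopologicalSpace G :=
  TopologicalSpace.generateFrom
    {s | ∃ N : AddSubgroup G, N.FiniteIndex ∧ ∃ x : G, s = (fun y => x + y) '' (N : Set G)}

/-- No small subgroups for the circle: a point all of whose multiples are within
distance `1/4` of zero must be zero. -/
lemma aux_no_small (z : AddCircle (1 : ℝ)) (h : ∀ n : ℕ, ‖n • z‖ < 1/4) : z = 0 := by
  by_contra hz
  obtain ⟨x₀, rfl⟩ : ∃ x : ℝ, (x : AddCircle (1:ℝ)) = z := Quotient.exists_rep z
  set x : ℝ := x₀ - round x₀ with hxdef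
  have hx : (x : AddCircle (1:ℝ)) = (x₀ : AddCircle (1:ℝ)) := by
    have : ((round x₀ : ℝ) : AddCircle (1:ℝ)) = 0 := by
      rw [AddCircle.coe_eq_zero_iff]
      exact ⟨round x₀, by simp⟩
    push_cast [hxdef]
    rw [sub_eq_add_neg, AddCircle.coe_add, AddCircle.coe_neg, this]
    simp
  have hnorm : ‖(x₀ : AddCircle (1:ℝ))‖ = |x| := by
    rw [AddCircle.norm_eq]; simp [hxdef]
  have ht0 : 0 < |x| := by
    rw [← hnorm]
    exact norm_pos_iff.mpr hz
  have key : ∀ n : ℕ, |(n : ℝ) * x| ≤ 1/2 → ‖(n : ℕ) • (x₀ : AddCircle (1:ℝ))‖ = (n : ℝ) * |x| := by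
    intro n hn
    have : ((n : ℕ) • (x₀ : AddCircle (1:ℝ))) = (((n : ℝ) * x : ℝ) : AddCircle (1:ℝ)) := by
      rw [← hx, ← AddCircle.coe_nsmul]
      norm_num
    rw [this, (AddCircle.norm_coe_eq_abs_iff (1:ℝ) one_ne_zero).mpr (by simpa using hn)]
    rw [abs_mul, abs_of_nonneg (by positivity : (0:ℝ) ≤ (n:ℝ))]
  rcases le_or_gt (1/4 : ℝ) |x| with h4 | h4
  · have h1 := h 1
    have : ‖(1 : ℕ) • (x₀ : AddCircle (1:ℝ))‖ = |x| := by
      rw [one_smul, hnorm]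
    rw [this] at h1
    linarith
  · set n : ℕ := ⌈(1/4 : ℝ) / |x|⌉₊ with hndef
    have hle : (1/4 : ℝ) ≤ (n : ℝ) * |x| := by
      have := Nat.le_ceil ((1/4 : ℝ) / |x|)
      calc (1/4 : ℝ) = (1/4) / |x| * |x| := by field_simp
        _ ≤ (n : ℝ) * |x| := by
            apply mul_le_mul_of_nonneg_right _ (le_of_lt ht0)
            exact this
    have hlt : (n : ℝ) * |x| < 1/2 := by
      have hc : (n : ℝ) < (1/4 : ℝ) / |x| + 1 :=
        Nat.ceil_lt_add_one (by positivity)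
      have : (n : ℝ) * |x| < ((1/4 : ℝ) / |x| + 1) * |x| :=
        mul_lt_mul_of_pos_right hc ht0
      have heq : ((1/4 : ℝ) / |x| + 1) * |x| = 1/4 + |x| := by
        rw [add_mul, div_mul_cancel₀ _ ht0.ne', one_mul]
      rw [heq] at this
      linarith
    have := h n
    rw [key n (by rw [abs_mul, abs_of_nonneg (by positivity : (0:ℝ) ≤ (n:ℝ))]; linarith)] at this
    linarith

/-- Any open set of the profinite topology containing `0` contains a finite-index
subgroup. -/
lemma aux_exists_subgroup {G : Type*} [AddCommGroup G] {s : Set G}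
    (hs : TopologicalSpace.GenerateOpen
      {s | ∃ N : AddSubgroup G, N.FiniteIndex ∧ ∃ x : G, s = (fun y => x + y) '' (N : Set G)} s)
    (h0 : (0 : G) ∈ s) : ∃ N : AddSubgroup G, N.FiniteIndex ∧ (N : Set G) ⊆ s := by
  induction hs with
  | basic t ht =>
      obtain ⟨N, hN, x, rfl⟩ := ht
      refine ⟨N, hN, ?_⟩
      obtain ⟨y, hy, hxy⟩ := h0
      have hxy' : x + y = 0 := hxy
      have hxN : x ∈ N := by
        rw [eq_neg_of_add_eq_zero_left hxy']; exact N.neg_mem hy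
      intro g hg
      exact ⟨-x + g, N.add_mem (N.neg_mem hxN) hg, add_neg_cancel_left x g⟩
  | univ => exact ⟨⊤, inferInstance, Set.subset_univ _⟩
  | inter t u _ _ iht ihu =>
      obtain ⟨N, hN, hNs⟩ := iht h0.1
      obtain ⟨M, hM, hMs⟩ := ihu h0.2
      haveI := hN; haveI := hM
      exact ⟨N ⊓ M, inferInstance, fun g hg =>
        ⟨hNs hg.1, hMs hg.2⟩⟩
  | sUnion S _ ih =>
      obtain ⟨t, htS, h0t⟩ := h0
      obtain ⟨N, hN, hNt⟩ := ih t htS h0t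
      exact ⟨N, hN, hNt.trans (Set.subset_sUnion_of_mem htS)⟩

/-- The `m`-torsion of the circle is covered by the points `k/m`. -/
lemma aux_torsion_subset (m : ℕ) (hm : 0 < m) :
    {u : AddCircle (1:ℝ) | m • u = 0} ⊆
      Set.range (fun k : Fin m => (((k : ℝ) / (m : ℝ) : ℝ) : AddCircle (1:ℝ))) := by
  rintro u hu
  obtain ⟨x, rfl⟩ : ∃ x : ℝ, (x : AddCircle (1:ℝ)) = u := Quotient.exists_rep u
  have : ((m • x : ℝ) : AddCircle (1:ℝ)) = 0 := by
    rw [AddCircle.coe_nsmul]; exact hu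
  rw [AddCircle.coe_eq_zero_iff] at this
  obtain ⟨n, hn⟩ := this
  have hmx : (m : ℝ) * x = (n : ℝ) := by
    have _ := hn
    simpa [nsmul_eq_mul] using hn.symm
  have hm' : (0:ℝ) < (m:ℝ) := by exact_mod_cast hm
  have hxeq : x = (n : ℝ) / m := by
    rw [eq_div_iff hm'.ne', mul_comm]; exact hmx
  set k : ℤ := n % m with hk
  have hk0 : 0 ≤ k := Int.emod_nonneg n (by exact_mod_cast hm.ne')
  have hkm : k < m := Int.emod_lt_of_pos n (by exact_mod_cast hm)
  refine ⟨⟨k.toNat, by omega⟩, ?_⟩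
  have hcast : ((⟨k.toNat, by omega⟩ : Fin m) : ℝ) = (k : ℝ) := by
    simp only [Fin.val_mk]
    exact_mod_cast congrArg (Int.cast : ℤ → ℝ) (Int.toNat_of_nonneg hk0)
  simp only [hcast]
  have hdiff : x - (k : ℝ) / m = ((n / m : ℤ) : ℝ) := by
    have hq : (m : ℤ) * (n / m) + k = n := Int.mul_ediv_add_emod n m
    have hqr : (m : ℝ) * ((n / m : ℤ) : ℝ) + (k : ℝ) = (n : ℝ) := by exact_mod_cast hq
    rw [hxeq]
    field_simp
    linarith
  have : ((x - (k : ℝ) / m : ℝ) : AddCircle (1:ℝ)) = 0 := by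
    rw [AddCircle.coe_eq_zero_iff]
    exact ⟨n / m, by rw [hdiff]; simp⟩
  have h2 : ((x : ℝ) : AddCircle (1:ℝ)) - (((k:ℝ)/m : ℝ) : AddCircle (1:ℝ)) = 0 := by
    rw [← AddCircle.coe_sub]; exact this
  rw [sub_eq_zero] at h2
  exact h2.symm

/-- A character is continuous for the profinite topology iff it is torsion. -/
theorem continuous_profiniteTopology_iff_torsion (G : Type*) [AddCommGroup G]
    (χ : G →+ AddCircle (1 : ℝ)) :
    @Continuous G (AddCircle (1 : ℝ)) (profiniteTopology G) inferInstance χ ↔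
      ∃ m : ℕ, 0 < m ∧ m • χ = 0 := by
  letI : TopologicalSpace G := profiniteTopology G
  constructor
  · intro h
    have hball : IsOpen (Metric.ball (0 : AddCircle (1:ℝ)) (1/4)) := Metric.isOpen_ball
    have hpre : @IsOpen G (profiniteTopology G) (χ ⁻¹' Metric.ball 0 (1/4)) :=
      h.isOpen_preimage _ hball
    have h0 : (0 : G) ∈ χ ⁻¹' Metric.ball 0 (1/4) := by
      simp [Metric.mem_ball]
    obtain ⟨N, hN, hNsub⟩ := aux_exists_subgroup hpre h0
    have hker : N ≤ χ.ker := by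
      intro g hg
      rw [AddMonoidHom.mem_ker]
      apply aux_no_small
      intro n
      have hng : n • g ∈ N := N.nsmul_mem hg n
      have := hNsub hng
      rw [Set.mem_preimage, Metric.mem_ball, dist_zero_right] at this
      rwa [← map_nsmul]
    haveI := hN
    haveI : χ.ker.FiniteIndex := AddSubgroup.finiteIndex_of_le hker
    refine ⟨χ.ker.index, Nat.pos_of_ne_zero AddSubgroup.FiniteIndex.index_ne_zero, ?_⟩
    ext g
    have : χ.ker.index • g ∈ χ.ker := AddSubgroup.nsmul_index_mem χ.ker g
    rw [AddMonoidHom.mem_ker] at this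
    simpa [map_nsmul] using this
  · rintro ⟨m, hm, hχ⟩
    -- the range of χ is finite, so the kernel has finite index
    have hrange : (Set.range χ).Finite := by
      apply Set.Finite.subset (Set.finite_range
        (fun k : Fin m => (((k : ℝ) / (m : ℝ) : ℝ) : AddCircle (1:ℝ))))
      rintro _ ⟨g, rfl⟩
      apply aux_torsion_subset m hm
      show m • χ g = 0
      have : (m • χ) g = 0 := by rw [hχ]; rfl
      simpa using this
    haveI : Finite χ.range := by
      have hco : (χ.range : Set (AddCircle (1:ℝ))) = Set.range χ := AddMonoidHom.coe_range χ
      rw [← hco] at hrange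
      exact hrange.to_subtype
    haveI : χ.ker.FiniteIndex := by
      constructor
      rw [AddSubgroup.index_ker]
      haveI : Nonempty χ.range := ⟨⟨χ 0, ⟨0, rfl⟩⟩⟩
      exact Nat.card_pos.ne'
    refine ⟨fun s _ => ?_⟩
    have hdecomp : χ ⁻¹' s = ⋃ g ∈ χ ⁻¹' s, (fun y => g + y) '' (χ.ker : Set G) := by
      ext x
      constructor
      · intro hx
        refine Set.mem_biUnion hx ⟨0, χ.ker.zero_mem, by simp⟩
      · intro hx
        simp only [Set.mem_iUnion] at hx
        obtain ⟨g, hg, y, hy, rfl⟩ := hx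
        have hy' : χ y = 0 := hy
        show χ (g + y) ∈ s
        rw [map_add, hy', add_zero]
        exact hg
    rw [hdecomp]
    apply isOpen_biUnion
    intro g _
    apply TopologicalSpace.isOpen_generateFrom_of_mem
    exact ⟨χ.ker, inferInstance, g, rfl⟩
end

section
/- Let G be an abelian group with infinitely many finite-index subgroups. Then the cardinality of the set of finite-index subgroups of G equals the cardinality of the set of finite-index subgroups N with G/N cyclic. -/
/-!
A finite quotient `G ⧸ N` is a direct sum of groups `ZMod nᵢ`, so `N` is the intersection of the
kernels of the finitely many coordinate maps `G → ZMod nᵢ`, each of which has cyclic quotient.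
Thus every finite-index subgroup is the infimum of a finite set of subgroups with cyclic
quotient, and an infinite set has only as many finite subsets as elements.
-/

open Cardinal

theorem Cardinal.mk_eq_of_forall_eq_finset_inf {α : Type*} [SemilatticeInf α] [OrderTop α]
    {C S : Set α} (hCS : C ⊆ S) (hS : S.Infinite)
    (hinf : ∀ a ∈ S, ∃ t : Finset C, t.inf (↑) = a) : #S = #C := by
  have hS_le : #S ≤ #(Finset C) :=
    (mk_le_mk_of_subset fun a ha ↦ (hinf a ha :)).trans mk_range_le
  have : Infinite C := by
    refine not_finite_iff_infinite.mp fun _ ↦ hS ?_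
    exact Set.finite_coe_iff.mp (mk_lt_aleph0_iff.mp (hS_le.trans_lt (lt_aleph0_of_finite _)))
  exact le_antisymm (hS_le.trans (mk_finset_of_infinite C).le) (mk_le_mk_of_subset hCS)

namespace AddSubgroup

theorem isAddCyclic_quotient_ker {G H : Type*} [AddGroup G] [AddGroup H] [IsAddCyclic H]
    (f : G →+ H) : IsAddCyclic (G ⧸ f.ker) :=
  let e := QuotientAddGroup.quotientKerEquivRange f
  isAddCyclic_of_surjective e.symm e.symm.surjective

theorem exists_iInf_ker_zmod_eq {G : Type*} [AddCommGroup G] (N : AddSubgroup G)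
    [N.FiniteIndex] : ∃ (ι : Type) (_ : Fintype ι) (n : ι → ℕ) (φ : ∀ i, G →+ ZMod (n i)),
      ⨅ i, (φ i).ker = N := by
  obtain ⟨ι, _, n, -, ⟨e⟩⟩ := AddCommGroup.equiv_directSum_zmod_of_finite' (G ⧸ N)
  refine ⟨ι, inferInstance, n, fun i ↦ ((DFinsupp.evalAddMonoidHom i).comp e.toAddMonoidHom).comp
    (QuotientAddGroup.mk' N), ?_⟩
  ext x
  simp only [mem_iInf, AddMonoidHom.mem_ker, AddMonoidHom.comp_apply]
  rw [← QuotientAddGroup.eq_zero_iff, ← map_eq_zero_iff e e.injective, DFinsupp.ext_iff]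
  rfl

theorem exists_finset_cyclicQuotient_inf_eq {G : Type*} [AddCommGroup G] (N : AddSubgroup G)
    [N.FiniteIndex] : ∃ t : Finset {M : AddSubgroup G // M.FiniteIndex ∧ IsAddCyclic (G ⧸ M)},
      t.inf (↑) = N := by
  classical
  obtain ⟨ι, _, n, φ, hφ⟩ := exists_iInf_ker_zmod_eq N
  have hle : ∀ i, N ≤ (φ i).ker := fun i ↦ hφ ▸ iInf_le _ i
  refine ⟨Finset.univ.image fun i ↦
    ⟨(φ i).ker, finiteIndex_of_le (hle i), isAddCyclic_quotient_ker (φ i)⟩, ?_⟩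
  rw [Finset.inf_image]
  exact (Finset.inf_univ_eq_iInf _).trans hφ

end AddSubgroup

/-- If G has infinitely many finite-index subgroups, their number equals the number of
finite-index subgroups with cyclic quotient. -/
theorem card_finiteIndex_eq_card_cyclic_quotient (G : Type*) [AddCommGroup G]
    (h : {N : AddSubgroup G | N.FiniteIndex}.Infinite) :
    Cardinal.mk {N : AddSubgroup G // N.FiniteIndex} =
      Cardinal.mk {N : AddSubgroup G // N.FiniteIndex ∧ IsAddCyclic (G ⧸ N)} :=
  mk_eq_of_forall_eq_finset_inf (C := {N : AddSubgroup G | N.FiniteIndex ∧ IsAddCyclic (G ⧸ N)})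
    (fun _ hN ↦ hN.1) h fun N (_ : N.FiniteIndex) ↦
      AddSubgroup.exists_finset_cyclicQuotient_inf_eq N
end

section
/- Let G be an abelian group with infinitely many finite-index subgroups. Then |𝒞(G)| equals the cardinality of the torsion subgroup of Hom(G, ℝ/ℤ). -/
/-!
A subgroup `N` of `G` is cut out by the characters `G → ℝ/ℤ` vanishing on it, since characters
separate the points of `G ⧸ N`. If `N` has finite index, these are the characters of the finite
group `G ⧸ N`: finitely many, and all torsion. So `N` is determined by a finite set of torsion
characters, and `|𝒞(G)| ≤ |Finset T| = |T|` for the (necessarily infinite) torsion group `T`.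
Conversely `χ ↦ ker χ` maps `T` to `𝒞(G)` with finite fibres, so `|T| ≤ |𝒞(G)| · ℵ₀ = |𝒞(G)|`.
-/

open Cardinal

namespace AddCircle

noncomputable def ratToReal : AddCircle (1 : ℚ) →+ AddCircle (1 : ℝ) :=
  QuotientAddGroup.map _ _ (Rat.castHom ℝ).toAddMonoidHom <| by
    rintro _ ⟨k, rfl⟩
    exact ⟨k, by simp⟩

lemma ratToReal_injective : Function.Injective ratToReal := by
  refine (injective_iff_map_eq_zero _).mpr fun x hx => ?_
  induction x using QuotientAddGroup.induction_on with | H q => ?_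
  obtain ⟨k, hk⟩ := (coe_eq_zero_iff (1 : ℝ)).mp hx
  have hk' : ((k : ℚ) : ℝ) = q := by simpa using hk
  exact (coe_eq_zero_iff (1 : ℚ)).mpr ⟨k, by simpa using Rat.cast_injective hk'⟩

lemma exists_addMonoidHom_apply_ne_zero {Q : Type*} [AddCommGroup Q] {q : Q} (hq : q ≠ 0) :
    ∃ χ : Q →+ AddCircle (1 : ℝ), χ q ≠ 0 := by
  obtain ⟨c, hc⟩ := CharacterModule.exists_character_apply_ne_zero_of_ne_zero hq
  exact ⟨ratToReal.comp c, ratToReal_injective.ne_iff' (map_zero _) |>.mpr hc⟩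

end AddCircle

lemma AddMonoidHom.finite_of_finite_torsion {A B : Type*} [AddCommGroup A] [Finite A]
    [AddCommGroup B] (hB : {x : B | Nat.card A • x = 0}.Finite) : Finite (A →+ B) := by
  have := hB.to_subtype
  refine Finite.of_injective
    (fun f a => (⟨f a, ?_⟩ : {x : B | Nat.card A • x = 0})) fun f g hfg => ?_
  · simp [← map_nsmul, card_nsmul_eq_zero']
  · ext a
    exact congrArg Subtype.val (congrFun hfg a)

lemma AddMonoidHom.finiteIndex_ker_of_isOfFinAddOrder {G : Type*} [AddCommGroup G]
    {χ : G →+ AddCircle (1 : ℝ)} (hχ : IsOfFinAddOrder χ) : χ.ker.FiniteIndex := by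
  have : Finite χ.range := by
    refine ((AddCircle.finite_torsion 1 hχ.addOrderOf_pos).subset ?_).to_subtype
    rintro _ ⟨x, rfl⟩
    simp [← AddMonoidHom.nsmul_apply, addOrderOf_nsmul_eq_zero]
  infer_instance

namespace AddSubgroup

variable {G : Type*} [AddCommGroup G]

def circleAnnihilator (N : AddSubgroup G) : Set (G →+ AddCircle (1 : ℝ)) := {χ | N ≤ χ.ker}

lemma mem_iff_forall_mem_circleAnnihilator (N : AddSubgroup G) (x : G) :
    x ∈ N ↔ ∀ χ ∈ N.circleAnnihilator, χ x = 0 := by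
  refine ⟨fun hx χ hχ => hχ hx, fun hx => ?_⟩
  by_contra hxN
  obtain ⟨ψ, hψ⟩ := AddCircle.exists_addMonoidHom_apply_ne_zero
    ((QuotientAddGroup.eq_zero_iff x).not.mpr hxN)
  refine hψ (hx (ψ.comp (QuotientAddGroup.mk' N)) fun y hy => ?_)
  simp [(QuotientAddGroup.eq_zero_iff y).mpr hy]

lemma circleAnnihilator_injective : Function.Injective (circleAnnihilator (G := G)) :=
  fun N M hNM => by
    ext x
    rw [mem_iff_forall_mem_circleAnnihilator, hNM, ← mem_iff_forall_mem_circleAnnihilator]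

variable (N : AddSubgroup G) [N.FiniteIndex]

lemma finite_circleAnnihilator : N.circleAnnihilator.Finite := by
  have : Finite (G ⧸ N →+ AddCircle (1 : ℝ)) :=
    AddMonoidHom.finite_of_finite_torsion (AddCircle.finite_torsion 1 Nat.card_pos)
  refine (Set.finite_range fun ψ : G ⧸ N →+ _ => ψ.comp (QuotientAddGroup.mk' N)).subset
    fun χ hχ => ⟨QuotientAddGroup.lift N χ hχ, rfl⟩

lemma circleAnnihilator_subset_torsion :
    N.circleAnnihilator ⊆ AddCommGroup.torsion (G →+ AddCircle (1 : ℝ)) := fun χ hχ =>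
  isOfFinAddOrder_iff_nsmul_eq_zero.mpr ⟨N.index, Nat.pos_of_ne_zero FiniteIndex.index_ne_zero,
    AddMonoidHom.ext fun x => by simpa [← map_nsmul] using hχ (N.nsmul_index_mem x)⟩

end AddSubgroup

section Counting

variable {G : Type*} [AddCommGroup G]

open AddSubgroup in
lemma mk_finiteIndex_le_mk_torsion (h : {N : AddSubgroup G | N.FiniteIndex}.Infinite) :
    #{N : AddSubgroup G // N.FiniteIndex} ≤ #(AddCommGroup.torsion (G →+ AddCircle (1 : ℝ))) := by
  set T := AddCommGroup.torsion (G →+ AddCircle (1 : ℝ))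
  let ann (N : {N : AddSubgroup G // N.FiniteIndex}) : Finset T :=
    have := N.2
    (N.1.finite_circleAnnihilator.preimage Subtype.val_injective.injOn).toFinset
  have ann_injective : Function.Injective ann := fun N M hNM => by
    have := N.2
    have := M.2
    refine Subtype.ext (circleAnnihilator_injective ?_)
    have image_val (N : AddSubgroup G) [N.FiniteIndex] :
        Subtype.val '' (Subtype.val ⁻¹' N.circleAnnihilator : Set T) = N.circleAnnihilator :=
      Set.image_preimage_eq_of_subset (by simpa using circleAnnihilator_subset_torsion N)
    simpa [ann, image_val] using congrArg (fun s : Finset T => Subtype.val '' (s : Set T)) hNM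
  have : Infinite T := by
    by_contra hT
    have := not_infinite_iff_finite.mp hT
    exact h (Set.finite_coe_iff.mp (Finite.of_injective ann ann_injective))
  calc #{N : AddSubgroup G // N.FiniteIndex} ≤ #(Finset T) := mk_le_of_injective ann_injective
    _ = #T := mk_finset_of_infinite T

lemma mk_torsion_le_mk_finiteIndex (h : {N : AddSubgroup G | N.FiniteIndex}.Infinite) :
    #(AddCommGroup.torsion (G →+ AddCircle (1 : ℝ))) ≤ #{N : AddSubgroup G // N.FiniteIndex} := by
  set C := {N : AddSubgroup G // N.FiniteIndex}
  let ker (χ : AddCommGroup.torsion (G →+ AddCircle (1 : ℝ))) : C :=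
    ⟨χ.1.ker, AddMonoidHom.finiteIndex_ker_of_isOfFinAddOrder χ.2⟩
  have finite_fibre (N : C) : #(ker ⁻¹' {N}) ≤ ℵ₀ := by
    have := N.2
    refine ((N.1.finite_circleAnnihilator.preimage Subtype.val_injective.injOn).subset
      fun χ hχ => ?_).lt_aleph0.le
    exact (congrArg Subtype.val hχ).ge
  have hC : ℵ₀ ≤ #C := infinite_iff.mp h.to_subtype
  calc #(AddCommGroup.torsion (G →+ AddCircle (1 : ℝ))) ≤ #C * ℵ₀ :=
        mk_le_mk_mul_of_mk_preimage_le ker finite_fibre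
    _ = #C := mul_eq_left hC hC aleph0_ne_zero

end Counting

/-- If G has infinitely many finite-index subgroups, their number equals the cardinality of
the torsion subgroup of Hom(G, ℝ/ℤ). -/
theorem card_finiteIndex_eq_card_torsion_characters (G : Type*) [AddCommGroup G]
    (h : {N : AddSubgroup G | N.FiniteIndex}.Infinite) :
    Cardinal.mk {N : AddSubgroup G // N.FiniteIndex} =
      Cardinal.mk {χ : G →+ AddCircle (1 : ℝ) // ∃ m : ℕ, 0 < m ∧ m • χ = 0} := by
  have torsion_eq : #{χ : G →+ AddCircle (1 : ℝ) // ∃ m : ℕ, 0 < m ∧ m • χ = 0} =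
      #(AddCommGroup.torsion (G →+ AddCircle (1 : ℝ))) :=
    mk_congr (Equiv.subtypeEquivRight fun _ => isOfFinAddOrder_iff_nsmul_eq_zero.symm)
  rw [torsion_eq]
  exact le_antisymm (mk_finiteIndex_le_mk_torsion h) (mk_torsion_le_mk_finiteIndex h)
end
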